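/- ∫_0^1 (x^2 - x + 1/6) log Γ(x) dx = ζ(3)/(4π^2). -/

import Mathlib

open Real MeasureTheory intervalIntegral Set Finset

/-!
Write `B₂ = bernoulliFun 2`, which is symmetric under `x ↦ 1 - x`. Averaging the integral with its
reflection and using `Γ(x) Γ(1 - x) = π / sin (π x)` together with `∫₀¹ B₂ = 0` gives
`∫₀¹ B₂ log Γ = -½ ∫₀¹ B₂(x) log sin (π x) dx`. The Fourier series
`π² B₂(x) = ∑_{n ≥ 1} cos (2π n x) / n²` may be integrated term by term against the integrable
function `log sin (π x)`, and `∫₀¹ cos (2π n x) log sin (π x) dx = -1 / (2n)` by an integration by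
parts whose remaining integral is that of the Dirichlet kernel. Hence
`∫₀¹ B₂ log sin (π x) dx = -ζ(3) / (2π²)`.
-/

theorem sin_two_mul_nat_mul (N : ℕ) (t : ℝ) :
    sin (2 * N * t) = 2 * sin t * ∑ j ∈ range N, cos ((2 * j + 1) * t) := by
  induction N with
  | zero => simp
  | succ N ih =>
    have h := sin_sub_sin (2 * (N + 1) * t) (2 * N * t)
    rw [sum_range_succ, mul_add, ← ih]
    push_cast
    rw [← sub_eq_iff_eq_add', h]
    ring_nf

theorem integral_cos_two_pi_nat_mul (k : ℕ) :
    ∫ x in (0:ℝ)..1, cos (2 * π * k * x) = if k = 0 then 1 else 0 := by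
  split_ifs with hk
  · simp [hk]
  · have hc : 2 * π * k ≠ 0 := by positivity
    rw [intervalIntegral.integral_comp_mul_left (fun x => cos x) hc, integral_cos]
    have := sin_nat_mul_pi (2 * k)
    push_cast at this
    simp [show 2 * π * k = 2 * k * π by ring, this]

-- The integrand is `sin (2π N x) cot (π x)`, a Dirichlet kernel in disguise.
theorem integral_two_mul_cos_mul_sum_cos_odd_mul {N : ℕ} (hN : N ≠ 0) :
    ∫ x in (0:ℝ)..1, 2 * cos (π * x) * ∑ j ∈ range N, cos ((2 * j + 1) * (π * x)) = 1 := by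
  have h : ∀ x : ℝ, 2 * cos (π * x) * ∑ j ∈ range N, cos ((2 * j + 1) * (π * x)) =
      ∑ j ∈ range N, (cos (2 * π * j * x) + cos (2 * π * (j + 1 : ℕ) * x)) := by
    intro x
    rw [mul_sum]
    refine sum_congr rfl fun j _ => ?_
    rw [two_mul_cos_mul_cos]
    push_cast
    ring_nf
    rw [cos_neg, add_comm]
  simp_rw [h]
  have hcos (k : ℕ) : IntervalIntegrable (fun x : ℝ => cos (2 * π * k * x)) volume 0 1 :=
    (by fun_prop : Continuous fun x : ℝ => cos (2 * π * k * x)).intervalIntegrable _ _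
  rw [intervalIntegral.integral_finsetSum fun j _ => (hcos j).add (hcos (j + 1))]
  simp_rw [intervalIntegral.integral_add (hcos _) (hcos _), integral_cos_two_pi_nat_mul]
  simp [sum_ite_eq', Nat.pos_of_ne_zero hN]

theorem intervalIntegrable_log_sin_pi_mul (a b : ℝ) :
    IntervalIntegrable (fun x => log (sin (π * x))) volume a b := by
  have : AnalyticOnNhd ℝ (fun x => sin (π * x)) (uIcc a b) := fun x _ =>
    analyticAt_sin.comp (analyticAt_const.mul analyticAt_id)
  exact this.meromorphicOn.intervalIntegrable_log

theorem integral_cos_two_pi_nat_mul_mul_log_sin_pi_mul {N : ℕ} (hN : N ≠ 0) :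
    ∫ x in (0:ℝ)..1, cos (2 * π * N * x) * log (sin (π * x)) = -1 / (2 * N) := by
  set P : ℝ → ℝ := fun x => ∑ j ∈ range N, cos ((2 * j + 1) * (π * x)) with hP
  have hsin (x : ℝ) : sin (2 * π * N * x) = 2 * sin (π * x) * P x := by
    rw [hP, ← sin_two_mul_nat_mul]; ring_nf
  -- `y log y` is continuous at `0`, and `sin (2π N x)` is `sin (π x)` times a continuous function.
  have hcont : Continuous fun x => sin (2 * π * N * x) * log (sin (π * x)) := by
    have : Continuous fun x => 2 * P x * (sin (π * x) * log (sin (π * x))) :=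
      (by fun_prop : Continuous fun x => 2 * P x).mul (continuous_mul_log.comp (by fun_prop))
    convert this using 2 with x
    rw [hsin]; ring
  -- Integrating this derivative is the integration by parts against `sin (2π N x) / (2π N)`.
  have hderiv : ∀ x ∈ Ioo (0:ℝ) 1, HasDerivAt (fun x => sin (2 * π * N * x) * log (sin (π * x)))
      (2 * π * N * (cos (2 * π * N * x) * log (sin (π * x))) +
        π * (2 * cos (π * x) * P x)) x := by
    intro x hx
    have hs : 0 < sin (π * x) :=
      sin_pos_of_pos_of_lt_pi (by nlinarith [pi_pos, hx.1]) (by nlinarith [pi_pos, hx.2])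
    have h1 := ((hasDerivAt_id x).const_mul (2 * π * N)).sin
    have h2 := ((hasDerivAt_id x).const_mul π).sin.log hs.ne'
    refine (h1.mul h2).congr_deriv ?_
    simp only [id, mul_one]
    rw [hsin]; field_simp
  have hint : IntervalIntegrable (fun x => cos (2 * π * N * x) * log (sin (π * x))) volume 0 1 :=
    (intervalIntegrable_log_sin_pi_mul 0 1).continuousOn_mul (by fun_prop)
  have hP_int : IntervalIntegrable (fun x => 2 * cos (π * x) * P x) volume 0 1 :=
    (by fun_prop : Continuous fun x => 2 * cos (π * x) * P x).intervalIntegrable _ _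
  have hFTC := integral_eq_sub_of_hasDerivAt_of_le zero_le_one hcont.continuousOn hderiv
    ((hint.const_mul _).add (hP_int.const_mul _))
  rw [intervalIntegral.integral_add (hint.const_mul _) (hP_int.const_mul _),
    intervalIntegral.integral_const_mul, intervalIntegral.integral_const_mul, hP,
    integral_two_mul_cos_mul_sum_cos_odd_mul hN, hsin] at hFTC
  simp only [mul_one, sin_pi, mul_zero, zero_mul, log_zero, sin_zero, sub_self] at hFTC
  rw [eq_div_iff (by positivity)]
  nlinarith [pi_pos]

theorem hasSum_intervalIntegral_mul_of_norm_le {a b : ℝ} {φ : ℕ → ℝ → ℝ} {f g : ℝ → ℝ} {c : ℕ → ℝ}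
    (hφ : ∀ n, Continuous (φ n)) (hφc : ∀ n x, ‖φ n x‖ ≤ c n) (hc : Summable c)
    (hφf : ∀ x ∈ uIoc a b, HasSum (fun n => φ n x) (f x)) (hg : IntervalIntegrable g volume a b) :
    HasSum (fun n => ∫ x in a..b, φ n x * g x) (∫ x in a..b, f x * g x) := by
  refine intervalIntegral.hasSum_integral_of_dominated_convergence (fun n x => c n * ‖g x‖)
    (fun n => (hφ n).aestronglyMeasurable.mul hg.def'.aestronglyMeasurable)
    (fun n => .of_forall fun x _ => ?_) (.of_forall fun x _ => hc.mul_right _) ?_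
    (.of_forall fun x hx => (hφf x hx).mul_right (g x))
  · rw [norm_mul]
    exact mul_le_mul_of_nonneg_right (hφc n x) (norm_nonneg _)
  · simp_rw [tsum_mul_right]
    exact hg.norm.const_mul _

theorem riemannZeta_natCast_re {k : ℕ} (hk : 1 < k) :
    (riemannZeta k).re = ∑' n : ℕ, 1 / (n : ℝ) ^ k := by
  rw [zeta_nat_eq_tsum_of_gt_one hk, ← Complex.ofReal_re (∑' n : ℕ, 1 / (n : ℝ) ^ k)]
  push_cast [Complex.ofReal_tsum]
  rfl

theorem integral_bernoulliFun_two_mul_log_sin_pi_mul :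
    ∫ x in (0:ℝ)..1, bernoulliFun 2 x * log (sin (π * x)) =
      -(riemannZeta 3).re / (2 * π ^ 2) := by
  have hseries : ∀ x ∈ uIoc (0:ℝ) 1,
      HasSum (fun n : ℕ => 1 / (n : ℝ) ^ 2 * cos (2 * π * n * x)) (π ^ 2 * bernoulliFun 2 x) := by
    intro x hx
    have hx' : x ∈ Icc (0:ℝ) 1 := by
      rw [uIoc_of_le zero_le_one] at hx
      exact Ioc_subset_Icc_self hx
    have hc : (-1 : ℝ) ^ (1 + 1) * (2 * π) ^ 2 / 2 / (Nat.factorial 2 : ℕ) = π ^ 2 := by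
      norm_num [Nat.factorial]; ring
    have h := hasSum_one_div_nat_pow_mul_cos one_ne_zero hx'
    rwa [mul_one, hc] at h
  have hterm (n : ℕ) : ∫ x in (0:ℝ)..1, 1 / (n : ℝ) ^ 2 * cos (2 * π * n * x) * log (sin (π * x))
      = -1 / 2 * (1 / (n : ℝ) ^ 3) := by
    rcases eq_or_ne n 0 with rfl | hn
    · simp
    simp_rw [mul_assoc (1 / (n : ℝ) ^ 2)]
    rw [intervalIntegral.integral_const_mul, integral_cos_two_pi_nat_mul_mul_log_sin_pi_mul hn]
    field_simp
  have hbound (n : ℕ) (x : ℝ) : ‖1 / (n : ℝ) ^ 2 * cos (2 * π * n * x)‖ ≤ 1 / (n : ℝ) ^ 2 := by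
    rw [norm_mul, norm_of_nonneg (by positivity)]
    exact mul_le_of_le_one_right (by positivity) (abs_cos_le_one _)
  have h := hasSum_intervalIntegral_mul_of_norm_le (fun n => by fun_prop) hbound
    ((Real.summable_one_div_nat_pow (p := 2)).mpr one_lt_two) hseries
    (intervalIntegrable_log_sin_pi_mul 0 1)
  rw [funext hterm] at h
  simp_rw [mul_assoc, intervalIntegral.integral_const_mul] at h
  have hζ : (riemannZeta 3).re = ∑' n : ℕ, 1 / (n : ℝ) ^ 3 := by
    exact_mod_cast riemannZeta_natCast_re (k := 3) (by norm_num)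
  rw [hζ, eq_div_iff (by positivity)]
  linarith [h.tsum_eq.symm.trans tsum_mul_left]

theorem log_Gamma_add_log_Gamma_one_sub {x : ℝ} (hx : ∀ n : ℤ, x ≠ n) :
    log (Gamma x) + log (Gamma (1 - x)) = log π - log (sin (π * x)) := by
  have hΓ : Gamma x ≠ 0 := Gamma_ne_zero fun m h => hx (-m) (by simp [h])
  have hΓ' : Gamma (1 - x) ≠ 0 := Gamma_ne_zero fun m h => hx (m + 1) (by push_cast; linarith)
  have hsin : sin (π * x) ≠ 0 := by
    rw [Ne, sin_eq_zero_iff]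
    rintro ⟨n, hn⟩
    exact hx n (mul_left_cancel₀ pi_ne_zero (by linarith))
  rw [← log_mul hΓ hΓ', Gamma_mul_Gamma_one_sub, log_div pi_ne_zero hsin]

theorem intervalIntegrable_log_Gamma {a b : ℝ} (ha : 0 ≤ a) (hb : 0 ≤ b) :
    IntervalIntegrable (fun x => log (Gamma x)) volume a b := by
  have hcont : ContinuousOn (fun x => log (Gamma (x + 1))) (uIcc a b) := by
    intro x hx
    have hx0 : 0 ≤ x := le_trans (le_min ha hb) hx.1
    have hΓ : ContinuousAt Gamma (x + 1) :=
      (differentiableAt_Gamma fun m => by linarith [(Nat.cast_nonneg m : (0:ℝ) ≤ m)]).continuousAt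
    exact ((hΓ.comp_of_eq (continuous_add_const 1).continuousAt rfl).log
      (Gamma_pos_of_pos (by linarith)).ne').continuousWithinAt
  refine (hcont.intervalIntegrable.sub intervalIntegrable_log').congr fun x hx => ?_
  have hx0 : 0 < x := lt_of_le_of_lt (le_min ha hb) hx.1
  simp only [Gamma_add_one hx0.ne', log_mul hx0.ne' (Gamma_pos_of_pos hx0).ne']
  ring

theorem intervalIntegral_eq_half_integral_add_comp_sub {f : ℝ → ℝ} {a b : ℝ}
    (hf : IntervalIntegrable f volume a b) :
    ∫ x in a..b, f x = (∫ x in a..b, (f x + f (a + b - x))) / 2 := by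
  have hf' : IntervalIntegrable (fun x => f (a + b - x)) volume a b := by
    simpa using (hf.comp_sub_left (a + b)).symm
  rw [intervalIntegral.integral_add hf hf', intervalIntegral.integral_comp_sub_left]
  simp

theorem integral_bernoulliFun_two_mul_log_Gamma :
    ∫ x in (0:ℝ)..1, bernoulliFun 2 x * log (Gamma x) =
      -(∫ x in (0:ℝ)..1, bernoulliFun 2 x * log (sin (π * x))) / 2 := by
  have hreflect : EqOn
      (fun x => bernoulliFun 2 x * log (Gamma x) +
        bernoulliFun 2 (0 + 1 - x) * log (Gamma (0 + 1 - x)))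
      (fun x => log π * bernoulliFun 2 x - bernoulliFun 2 x * log (sin (π * x))) (uIoo 0 1) := by
    intro x hx
    rw [uIoo_of_le zero_le_one] at hx
    have hx' : ∀ n : ℤ, x ≠ n := by
      rintro n rfl
      have h0 : (0 : ℤ) < n := by exact_mod_cast hx.1
      have h1 : n < 1 := by exact_mod_cast hx.2
      omega
    simp only [zero_add, bernoulliFun_eval_one_sub, Even.neg_one_pow even_two, one_mul]
    rw [← mul_add, log_Gamma_add_log_Gamma_one_sub hx']
    ring
  rw [intervalIntegral_eq_half_integral_add_comp_sub
      ((intervalIntegrable_log_Gamma le_rfl zero_le_one).continuousOn_mul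
        (continuous_bernoulliFun 2).continuousOn),
    intervalIntegral.integral_congr_uIoo hreflect,
    intervalIntegral.integral_sub ((intervalIntegrable_bernoulliFun (k := 2) 0 1).const_mul _)
      ((intervalIntegrable_log_sin_pi_mul 0 1).continuousOn_mul
        (continuous_bernoulliFun 2).continuousOn),
    intervalIntegral.integral_const_mul, integral_bernoulliFun_eq_zero two_ne_zero]
  ring

theorem stmt_18 :
    ∫ x in (0:ℝ)..1, (x ^ 2 - x + 1/6) * Real.log (Real.Gamma x) =
      (riemannZeta 3).re / (4 * Real.pi ^ 2) := by
  have hB (x : ℝ) : x ^ 2 - x + 1 / 6 = bernoulliFun 2 x := by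
    rw [bernoulliFun_two]; norm_num
  simp_rw [hB]
  rw [integral_bernoulliFun_two_mul_log_Gamma, integral_bernoulliFun_two_mul_log_sin_pi_mul]
  field_simp
  ring
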